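/- Let ψ be any 2-uniform substitution over alphabet A and β a two-sided periodic point of ψ of period 1 (i.e., a two-sided fixed point) with growing seed. Then the Dumont–Thomas complement numeration system rep_β coincides with the two's complement numeration system: for every n ∈ ℤ, rep_β(n) = rep_{2c}(n). -/
import Mathlib


open Filter List

variable {A : Type*}

/-- A substitution applied to a word: concatenation of the images of its letters. -/
def substW (η : A → List A) (w : List A) : List A := (w.map η).flatten

/-- The `k`-th iterate of a substitution applied to a word. -/
def iterW (η : A → List A) (k : ℕ) (w : List A) : List A := (substW η)^[k] w

/-- `η` is a substitution: nonempty images and at least one growing letter. -/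
def IsSubstitution (η : A → List A) : Prop :=
  (∀ c, η c ≠ []) ∧ ∃ a, Tendsto (fun k => (iterW η k [a]).length) atTop atTop

/-- `(m i, a i)` for `i = 0, …, len-1` is an `x`-admissible sequence:
`m (i) ++ [a i]` is a prefix of `η (a (i+1))` and `m (len-1) ++ [a (len-1)]`
is a prefix of `η x`. -/
def AdmSeq (η : A → List A) (len : ℕ) (m : ℕ → List A) (a : ℕ → A) (x : A) : Prop :=
  (∀ i, i + 1 < len → (m i ++ [a i]) <+: η (a (i + 1))) ∧
  (1 ≤ len → (m (len - 1) ++ [a (len - 1)]) <+: η x)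

/-- `Σ_{j<k} |η^j(m_j)|`. -/
def sumLen (η : A → List A) (k : ℕ) (m : ℕ → List A) : ℕ :=
  ∑ j ∈ Finset.range k, (iterW η j (m j)).length

/-- `η^{k-1}(m_{k-1}) η^{k-2}(m_{k-2}) ⋯ η^0(m_0)`. -/
def concatDT (η : A → List A) (k : ℕ) (m : ℕ → List A) : List A :=
  ((List.range k).reverse.map (fun j => iterW η j (m j))).flatten

/-- The digit word `|m_{k-1}| ⊙ |m_{k-2}| ⊙ ⋯ ⊙ |m_0|`. -/
def dtDigits (k : ℕ) (m : ℕ → List A) : List ℕ :=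
  (List.range k).reverse.map (fun j => (m j).length)

/-- Partial run of the automaton `A_{η,x}`: from state `x`, the digit `d`
moves to the `d`-th letter of `η x` when `d < |η x|`. -/
def run (η : A → List A) : List ℕ → A → Option A
  | [], x => some x
  | d :: w, x => if h : d < (η x).length then run η w ((η x)[d]) else none

/-- `u` restricted to nonnegative positions is a periodic point of `η` of period `p`:
every `η^p`-image of a prefix of `u` is again a prefix of `u`. -/
def RightPer (η : A → List A) (p : ℕ) (u : ℤ → A) : Prop :=
  ∀ n : ℕ, ∀ j : ℕ, j < (iterW η p (List.ofFn (fun i : Fin (n+1) => u i))).length →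
    (iterW η p (List.ofFn (fun i : Fin (n+1) => u i)))[j]? = some (u j)

/-- `u` restricted to negative positions is a periodic point of `η` of period `p`:
every `η^p`-image of a suffix `u_{-(n+1)} ⋯ u_{-1}` of the left part is again a
suffix of the left part of `u`. -/
def LeftPer (η : A → List A) (p : ℕ) (u : ℤ → A) : Prop :=
  ∀ n : ℕ, ∀ j : ℕ,
    j < (iterW η p (List.ofFn (fun i : Fin (n+1) => u ((i : ℤ) - (n+1))))).length →
    (iterW η p (List.ofFn (fun i : Fin (n+1) => u ((i : ℤ) - (n+1)))))[j]? =
      some (u ((j : ℤ) -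
        (iterW η p (List.ofFn (fun i : Fin (n+1) => u ((i : ℤ) - (n+1))))).length))

/-- `u : ℤ → A` is a two-sided periodic point of `η` of period `p ≥ 1` with
growing seed `u₋₁ | u₀`. -/
def TwoSidedPerPoint (η : A → List A) (p : ℕ) (u : ℤ → A) : Prop :=
  1 ≤ p ∧ RightPer η p u ∧ LeftPer η p u ∧
  Tendsto (fun k => (iterW η k [u 0]).length) atTop atTop ∧
  Tendsto (fun k => (iterW η k [u (-1)]).length) atTop atTop

/-- The Dumont–Thomas decomposition data of a positive integer `n` with respect to
the letter `x` (Theorem of Dumont–Thomas for the right-infinite part):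
`p ∣ k`, `p ≤ k`, the sequence is `x`-admissible, `m_{k-1} ⋯ m_{k-p} ≠ ε` and
`Σ_{j<k} |η^j(m_j)| = n`. -/
def PosSpec (η : A → List A) (p : ℕ) (x : A) (n : ℤ) (k : ℕ) (m : ℕ → List A)
    (a : ℕ → A) : Prop :=
  p ∣ k ∧ p ≤ k ∧ AdmSeq η k m a x ∧ (∃ i, i < p ∧ m (k - 1 - i) ≠ []) ∧
  (sumLen η k m : ℤ) = n

/-- The Dumont–Thomas decomposition data of an integer `n ≤ -2` with respect to
the letter `b` (Theorem of Dumont–Thomas for the left-infinite part). -/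
def NegSpec (η : A → List A) (p : ℕ) (b : A) (n : ℤ) (k : ℕ) (m : ℕ → List A)
    (a : ℕ → A) : Prop :=
  p ∣ k ∧ p ≤ k ∧ AdmSeq η k m a b ∧
  ((List.range p).map (fun i => iterW η (p - 1 - i) (m (k - 1 - i)))).flatten
      ++ [a (k - p)] ≠ iterW η p [b] ∧
  (sumLen η k m : ℤ) = n + (iterW η k [b]).length

/-- `w` is the Dumont–Thomas complement representation `rep_u(n)` of `n ∈ ℤ`. -/
def RepSpec (η : A → List A) (p : ℕ) (u : ℤ → A) (n : ℤ) (w : List ℕ) : Prop :=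
  (n = 0 ∧ w = [0]) ∨ (n = -1 ∧ w = [1]) ∨
  (1 ≤ n ∧ ∃ k m a, PosSpec η p (u 0) n k m a ∧ w = 0 :: dtDigits k m) ∨
  (n ≤ -2 ∧ ∃ k m a, NegSpec η p (u (-1)) n k m a ∧ w = 1 :: dtDigits k m)

/-- Run of the automaton `A_{η,s}` with initial state `start`: the first digit
`0` (resp. `1`) moves to `u 0` (resp. `u (-1)`). -/
def runSeed (η : A → List A) (u : ℤ → A) : List ℕ → Option A
  | [] => none
  | d :: w => if d = 0 then run η w (u 0) else if d = 1 then run η w (u (-1)) else none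

/-- `|η^{k-p-1}(m_{k-1}) ⋯ η^0(m_p)|`, the `u`-quotient of a positive integer. -/
def uQuotPos (η : A → List A) (p k : ℕ) (m : ℕ → List A) : ℤ :=
  ∑ j ∈ Finset.range (k - p), ((iterW η j (m (j + p))).length : ℤ)

/-- `w = tail_{η,p,x}(n)`: the digit word of the unique `x`-admissible sequence of
length `p` whose length-sum is `n`. -/
def TailSpec (η : A → List A) (p : ℕ) (x : A) (n : ℕ) (w : List ℕ) : Prop :=
  ∃ m a, AdmSeq η p m a x ∧ sumLen η p m = n ∧ w = dtDigits p m

/-- Radix order: shorter words first, ties broken lexicographically. -/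
def radLt (v w : List ℕ) : Prop :=
  v.length < w.length ∨ (v.length = w.length ∧ List.Lex (· < ·) v w)

/-- Reversed-radix order: longer words first, ties broken lexicographically. -/
def revLt (v w : List ℕ) : Prop :=
  w.length < v.length ∨ (v.length = w.length ∧ List.Lex (· < ·) v w)

/-- The total order `≺` on `{0,1}D*`. -/
def precLt (v w : List ℕ) : Prop :=
  (v.head? = some 1 ∧ w.head? = some 0) ∨
  (v.head? = some 0 ∧ w.head? = some 0 ∧ radLt v w) ∨
  (v.head? = some 1 ∧ w.head? = some 1 ∧ revLt v w)

/-- The base-2 value `Σ_{i<k} w_i 2^i` of the word `w = w_{k-1} ⋯ w_0`. -/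
def natVal2 (w : List ℕ) : ℕ := w.foldl (fun acc d => 2 * acc + d) 0

/-- The two's complement value `Σ_{i<k} w_i 2^i − w_{k-1} 2^k`. -/
def val2c (w : List ℕ) : ℤ := (natVal2 w : ℤ) - (w.headI : ℤ) * 2 ^ w.length

/-- Fibonacci numbers with `F 0 = 1`, `F 1 = 2`. -/
def fib2 : ℕ → ℕ
  | 0 => 1
  | 1 => 2
  | n + 2 => fib2 (n + 1) + fib2 n

/-- The Fibonacci complement value `Σ_{i<k} w_i F_i − w_{k-1} F_k`
of the word `w = w_{k-1} ⋯ w_0`. -/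
def valFc (w : List ℕ) : ℤ :=
  (∑ i ∈ Finset.range w.length, (w.reverse.getD i 0 : ℤ) * fib2 i) -
    (w.headI : ℤ) * fib2 w.length


section Helpers

variable {ψ : A → List A}

lemma substW_length (h2 : ∀ c, (ψ c).length = 2) (w : List A) :
    (substW ψ w).length = 2 * w.length := by
  induction w with
  | nil => simp [substW]
  | cons c w ih =>
    simp only [substW, List.map_cons, List.flatten_cons, List.length_append, h2,
      List.length_cons] at *
    omega

lemma iterW_length (h2 : ∀ c, (ψ c).length = 2) (k : ℕ) (w : List A) :
    (iterW ψ k w).length = 2 ^ k * w.length := by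
  induction k with
  | zero => simp [iterW]
  | succ k ih =>
    have : iterW ψ (k + 1) w = substW ψ (iterW ψ k w) := by
      simp [iterW, Function.iterate_succ_apply']
    rw [this, substW_length h2, ih, pow_succ]; ring

lemma natVal2_foldl (l : List ℕ) : ∀ acc : ℕ,
    l.foldl (fun a d => 2 * a + d) acc = acc * 2 ^ l.length + natVal2 l := by
  induction l with
  | nil => intro acc; simp [natVal2]
  | cons d l ih =>
    intro acc
    have h1 : (d :: l).foldl (fun a d => 2 * a + d) acc
        = l.foldl (fun a d => 2 * a + d) (2 * acc + d) := rfl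
    have h2 : natVal2 (d :: l) = l.foldl (fun a d => 2 * a + d) (2 * 0 + d) := rfl
    rw [h1, ih, h2, ih]
    simp only [List.length_cons, pow_succ]; ring

lemma natVal2_cons (d : ℕ) (l : List ℕ) :
    natVal2 (d :: l) = d * 2 ^ l.length + natVal2 l := by
  have : natVal2 (d :: l) = l.foldl (fun a d => 2 * a + d) (2 * 0 + d) := rfl
  rw [this, natVal2_foldl]; ring_nf

lemma natVal2_lt (l : List ℕ) (h : ∀ d ∈ l, d < 2) : natVal2 l < 2 ^ l.length := by
  induction l with
  | nil => simp [natVal2]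
  | cons d l ih =>
    rw [natVal2_cons]
    have hd : d ≤ 1 := by have := h d (by simp); omega
    have := ih (fun x hx => h x (by simp [hx]))
    have h1 : d * 2 ^ l.length ≤ 2 ^ l.length := by
      calc d * 2 ^ l.length ≤ 1 * 2 ^ l.length := by
            exact Nat.mul_le_mul_right _ hd
        _ = 2 ^ l.length := by ring
    simp only [List.length_cons, pow_succ]
    omega

lemma dtDigits_succ (k : ℕ) (m : ℕ → List A) :
    dtDigits (k + 1) m = (m k).length :: dtDigits k m := by
  simp [dtDigits, List.range_succ]

lemma dtDigits_length (k : ℕ) (m : ℕ → List A) : (dtDigits k m).length = k := by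
  simp [dtDigits]

lemma natVal2_range (k : ℕ) (g : ℕ → ℕ) :
    natVal2 ((List.range k).reverse.map g) = ∑ j ∈ Finset.range k, g j * 2 ^ j := by
  induction k with
  | zero => simp [natVal2]
  | succ k ih =>
    have h1 : (List.range (k + 1)).reverse.map g = g k :: (List.range k).reverse.map g := by
      simp [List.range_succ]
    rw [h1, natVal2_cons, ih, Finset.sum_range_succ]
    simp [add_comm]

lemma sumLen_eq (h2 : ∀ c, (ψ c).length = 2) (k : ℕ) (m : ℕ → List A) :
    sumLen ψ k m = ∑ j ∈ Finset.range k, (m j).length * 2 ^ j := by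
  unfold sumLen
  refine Finset.sum_congr rfl fun j _ => ?_
  rw [iterW_length h2]; ring

lemma natVal2_dtDigits (h2 : ∀ c, (ψ c).length = 2) (k : ℕ) (m : ℕ → List A) :
    natVal2 (dtDigits k m) = sumLen ψ k m := by
  rw [dtDigits, natVal2_range, sumLen_eq h2]

lemma take_getD_prefix {B : Type*} (l : List B) (n : ℕ) (x : B) (h : n < l.length) :
    l.take n ++ [l.getD n x] <+: l := by
  rw [List.getD_eq_getElem l x h]
  have heq : l.take n ++ [l[n]] = l.take (n + 1) := by
    rw [List.take_succ, List.getElem?_eq_getElem h]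
    rfl
  rw [heq]
  exact List.take_prefix _ _

lemma getD_reverse_mem (l : List ℕ) (j : ℕ) (h : j < l.length) : l.reverse.getD j 0 ∈ l := by
  rw [List.getD_eq_getElem _ _ (by simpa using h)]
  exact List.mem_reverse.mp (List.getElem_mem _)

lemma eq_range_map (l : List ℕ) :
    l = (List.range l.length).reverse.map (fun j => l.reverse.getD j 0) := by
  apply List.ext_getElem
  · simp
  · intro i h1 h2
    simp only [List.length_map, List.length_reverse, List.length_range] at h2
    simp only [List.getElem_map, List.getElem_reverse, List.length_range, List.getElem_range]
    rw [List.getD_eq_getElem _ _ (by simp only [List.length_reverse]; omega),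
      List.getElem_reverse]
    have hix : l.length - 1 - (l.length - 1 - i) = i := by omega
    simp only [hix]

lemma getD_reverse_last {B : Type*} (e x : B) (t : List B) :
    (e :: t).reverse.getD t.length x = e := by
  rw [List.getD_eq_getElem _ _ (by simp), List.getElem_reverse]
  simp

lemma adm_digit_le (h2 : ∀ c, (ψ c).length = 2) {k : ℕ} {m : ℕ → List A} {a : ℕ → A}
    {x : A} (hadm : AdmSeq ψ k m a x) {j : ℕ} (hj : j < k) : (m j).length ≤ 1 := by
  rcases Nat.lt_or_ge (j + 1) k with h | h
  · have := (hadm.1 j h).length_le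
    simp [h2] at this
    omega
  · have hjk : j = k - 1 := by omega
    have := (hadm.2 (by omega)).length_le
    rw [← hjk] at this
    simp [h2] at this
    omega

lemma construct_adm (h2 : ∀ c, (ψ c).length = 2) (x : A) (k : ℕ) (d : ℕ → ℕ)
    (hd : ∀ j, j < k → d j < 2) :
    ∃ m a, AdmSeq ψ k m a x ∧ ∀ j, j < k → (m j).length = d j := by
  classical
  set f : ℕ → A := fun i => Nat.rec x (fun i s => (ψ s).getD (d (k - 1 - i)) x) i with hf
  have hfs : ∀ i : ℕ, f (i + 1) = (ψ (f i)).getD (d (k - 1 - i)) x := fun i => rfl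
  refine ⟨fun i => (ψ (f (k - 1 - i))).take (d i),
    fun i => (ψ (f (k - 1 - i))).getD (d i) x, ⟨?_, ?_⟩, ?_⟩
  · intro i hi
    have hstate : f (k - 1 - i) = (ψ (f (k - 1 - (i + 1)))).getD (d (i + 1)) x := by
      have e1 : k - 1 - i = (k - 2 - i) + 1 := by omega
      have e2 : k - 1 - (k - 2 - i) = i + 1 := by omega
      rw [e1, hfs, e2]
      have e3 : k - 1 - (i + 1) = k - 2 - i := by omega
      rw [e3]
    have hlt : d i < (ψ (f (k - 1 - i))).length := by rw [h2]; exact hd i (by omega)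
    show (ψ (f (k - 1 - i))).take (d i) ++ [(ψ (f (k - 1 - i))).getD (d i) x]
        <+: ψ ((ψ (f (k - 1 - (i + 1)))).getD (d (i + 1)) x)
    rw [← hstate]
    exact take_getD_prefix _ _ _ hlt
  · intro hk
    have e0 : k - 1 - (k - 1) = 0 := by omega
    have hlt : d (k - 1) < (ψ (f (k - 1 - (k - 1)))).length := by
      rw [h2]; exact hd (k - 1) (by omega)
    show (ψ (f (k - 1 - (k - 1)))).take (d (k - 1))
        ++ [(ψ (f (k - 1 - (k - 1)))).getD (d (k - 1)) x] <+: ψ x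
    rw [e0] at hlt ⊢
    exact take_getD_prefix _ _ _ hlt
  · intro j hj
    rw [List.length_take, h2]
    have := hd j hj
    omega

end Helpers

/-- For a 2-uniform substitution `ψ` with a two-sided fixed
point `β` (period 1) with growing seed, the Dumont–Thomas complement numeration
system `rep_β` is the two's complement numeration system: `rep_β(n)` is the
unique binary word `w`, starting neither with `00` nor with `11`, such that
`val_{2c}(w) = n`. -/
theorem rep_eq_twos_complement [Finite A] (ψ : A → List A)
    (hψ : IsSubstitution ψ) (h2 : ∀ c, (ψ c).length = 2)
    (β : ℤ → A) (hβ : TwoSidedPerPoint ψ 1 β) :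
    ∀ (n : ℤ) (w : List ℕ),
      RepSpec ψ 1 β n w ↔
        ((∀ d ∈ w, d < 2) ∧ w ≠ [] ∧
          ¬ ([0, 0] <+: w) ∧ ¬ ([1, 1] <+: w) ∧ val2c w = n) := by
  intro n w
  have b0 := β 0
  constructor
  · -- forward direction
    rintro (⟨hn, hw⟩ | ⟨hn, hw⟩ | ⟨hn, k, m, a, hpos, hw⟩ | ⟨hn, k, m, a, hneg, hw⟩)
    · subst hn; subst hw
      refine ⟨by norm_num, by simp, ?_, ?_, by decide⟩
      · rintro ⟨t, ht⟩; simp at ht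
      · rintro ⟨t, ht⟩; simp at ht
    · subst hn; subst hw
      refine ⟨by norm_num, by simp, ?_, ?_, by decide⟩
      · rintro ⟨t, ht⟩; simp at ht
      · rintro ⟨t, ht⟩; simp at ht
    · -- positive case
      obtain ⟨hdvd, hpk, hadm, ⟨i, hi1, hmne⟩, hsum⟩ := hpos
      have hi0 : i = 0 := by omega
      subst hi0
      obtain ⟨k', rfl⟩ : ∃ k', k = k' + 1 := ⟨k - 1, by omega⟩
      simp only [Nat.add_sub_cancel] at hmne
      have hmtop : (m k').length = 1 := by
        have h1 := adm_digit_le h2 hadm (j := k') (by omega)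
        have h0 : (m k').length ≠ 0 := by
          simpa [List.length_eq_zero_iff] using hmne
        omega
      have hwform : w = 0 :: (m k').length :: dtDigits k' m := by
        rw [hw, dtDigits_succ]
      refine ⟨?_, by simp [hw], ?_, ?_, ?_⟩
      · intro e he
        rw [hw] at he
        rcases List.mem_cons.mp he with rfl | he
        · norm_num
        · simp only [dtDigits, List.mem_map, List.mem_reverse, List.mem_range] at he
          obtain ⟨j, hj, rfl⟩ := he
          have := adm_digit_le h2 hadm hj
          omega
      · rw [hwform, hmtop]
        rintro ⟨t, ht⟩
        simp at ht
      · rw [hwform]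
        rintro ⟨t, ht⟩
        simp at ht
      · rw [hw]
        have hnv : natVal2 (0 :: dtDigits (k' + 1) m) = sumLen ψ (k' + 1) m := by
          rw [natVal2_cons, natVal2_dtDigits h2]
          ring
        simp only [val2c, List.headI, hnv]
        push_cast
        rw [hsum]
        ring
    · -- negative case
      obtain ⟨hdvd, hpk, hadm, hne, hsum⟩ := hneg
      have hne' : m (k - 1) ++ [a (k - 1)] ≠ ψ (β (-1)) := by
        intro heq
        apply hne
        rw [show List.range 1 = [0] from rfl]
        simp only [List.map_cons, List.map_nil, List.flatten_cons, List.flatten_nil,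
          Nat.sub_zero, Nat.sub_self, iterW, Function.iterate_zero, id_eq,
          List.append_nil, Function.iterate_one, substW]
        rw [heq]
      have hpre := hadm.2 (by omega)
      have hmtop : m (k - 1) = [] := by
        by_contra hcne
        have hlen1 : (m (k - 1)).length = 1 := by
          have h1 := adm_digit_le h2 hadm (j := k - 1) (by omega)
          have h0 : (m (k - 1)).length ≠ 0 := by simpa [List.length_eq_zero_iff] using hcne
          omega
        have heq : m (k - 1) ++ [a (k - 1)] = ψ (β (-1)) := by
          apply hpre.eq_of_length
          simp [h2, hlen1]
        exact hne' heq
      obtain ⟨k', rfl⟩ : ∃ k', k = k' + 1 := ⟨k - 1, by omega⟩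
      simp only [Nat.add_sub_cancel] at hmtop
      have hwform : w = 1 :: (m k').length :: dtDigits k' m := by
        rw [hw, dtDigits_succ]
      refine ⟨?_, by simp [hw], ?_, ?_, ?_⟩
      · intro e he
        rw [hw] at he
        rcases List.mem_cons.mp he with rfl | he
        · norm_num
        · simp only [dtDigits, List.mem_map, List.mem_reverse, List.mem_range] at he
          obtain ⟨j, hj, rfl⟩ := he
          have := adm_digit_le h2 hadm hj
          omega
      · rw [hwform]
        rintro ⟨t, ht⟩
        simp at ht
      · rw [hwform, hmtop]
        rintro ⟨t, ht⟩
        simp at ht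
      · rw [hw]
        have hnv : natVal2 (1 :: dtDigits (k' + 1) m)
            = 2 ^ (k' + 1) + sumLen ψ (k' + 1) m := by
          rw [natVal2_cons, natVal2_dtDigits h2, dtDigits_length]
          ring
        have hiw : (iterW ψ (k' + 1) [β (-1)]).length = 2 ^ (k' + 1) := by
          rw [iterW_length h2]; simp
        rw [hiw] at hsum
        have hlw : (1 :: dtDigits (k' + 1) m).length = k' + 2 := by
          simp [dtDigits_length]
        simp only [val2c, List.headI, hnv, hlw]
        push_cast at hsum ⊢
        rw [hsum]
        ring
  · -- backward direction
    rintro ⟨hdig, hne, h00, h11, hval⟩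
    match w, hne with
    | d :: t, _ =>
    have hd2 : d < 2 := hdig d (by simp)
    rcases t with _ | ⟨e₀, t₀⟩
    · -- single digit
      rcases (by omega : d = 0 ∨ d = 1) with rfl | rfl
      · left
        refine ⟨?_, rfl⟩
        rw [← hval]; decide
      · right; left
        refine ⟨?_, rfl⟩
        rw [← hval]; decide
    · -- at least two digits
      set t : List ℕ := e₀ :: t₀ with ht
      set k := t.length with hk
      have hkt : k = t₀.length + 1 := by simp [hk, ht]
      have hk1 : 1 ≤ k := by omega
      set D : ℕ → ℕ := fun j => t.reverse.getD j 0 with hD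
      have hDlt : ∀ j, j < k → D j < 2 := by
        intro j hj
        exact hdig _ (List.mem_cons_of_mem d (getD_reverse_mem t j hj))
      have hDtop : D (k - 1) = e₀ := by
        have hix : k - 1 = t₀.length := by omega
        rw [hD]
        simp only
        rw [hix, ht]
        exact getD_reverse_last e₀ 0 t₀
      have hDtop2 : e₀ < 2 := hdig _ (by simp [ht])
      rcases (by omega : d = 0 ∨ d = 1) with rfl | rfl
      · -- positive: w = 0 :: t, head of t must be 1
        have he1 : e₀ = 1 := by
          rcases (by omega : e₀ = 0 ∨ e₀ = 1) with rfl | rfl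
          · exact absurd ⟨t₀, rfl⟩ h00
          · rfl
        obtain ⟨m, a, hadm, hml⟩ := construct_adm h2 (β 0) k D hDlt
        have htr : t = (List.range k).reverse.map D := by
          rw [hD, hk]; exact eq_range_map t
        have hdt : dtDigits k m = t := by
          rw [dtDigits, htr]
          apply List.map_congr_left
          intro j hj
          rw [List.mem_reverse, List.mem_range] at hj
          exact hml j hj
        have hsl : sumLen ψ k m = natVal2 t := by
          rw [← natVal2_dtDigits h2, hdt]
        have hnval : n = (natVal2 t : ℤ) := by
          rw [← hval]
          simp [val2c, natVal2_cons, ht]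
        have hn1 : 1 ≤ n := by
          rw [hnval, ht, he1]
          have h1 : 1 ≤ natVal2 (1 :: t₀) := by
            rw [natVal2_cons]
            have : 1 ≤ 2 ^ t₀.length := Nat.one_le_two_pow
            omega
          exact_mod_cast h1
        refine Or.inr (Or.inr (Or.inl ⟨hn1, k, m, a,
          ⟨one_dvd _, hk1, hadm, ⟨0, by norm_num, ?_⟩, ?_⟩, ?_⟩))
        · have hl1 : (m (k - 1 - 0)).length = 1 := by
            simpa [hDtop, he1] using hml (k - 1) (by omega)
          intro hc
          rw [hc] at hl1
          simp at hl1
        · rw [hsl, hnval]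
        · rw [hdt]
      · -- negative: w = 1 :: t, head of t must be 0
        have he0 : e₀ = 0 := by
          rcases (by omega : e₀ = 0 ∨ e₀ = 1) with rfl | rfl
          · rfl
          · exact absurd ⟨t₀, rfl⟩ h11
        obtain ⟨m, a, hadm, hml⟩ := construct_adm h2 (β (-1)) k D hDlt
        have htr : t = (List.range k).reverse.map D := by
          rw [hD, hk]; exact eq_range_map t
        have hdt : dtDigits k m = t := by
          rw [dtDigits, htr]
          apply List.map_congr_left
          intro j hj
          rw [List.mem_reverse, List.mem_range] at hj
          exact hml j hj
        have hsl : sumLen ψ k m = natVal2 t := by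
          rw [← natVal2_dtDigits h2, hdt]
        have hmtop : m (k - 1) = [] := by
          have h0 : (m (k - 1)).length = 0 := by
            simpa [hDtop, he0] using hml (k - 1) (by omega)
          exact List.length_eq_zero_iff.mp h0
        have hnval : n = (natVal2 t : ℤ) - 2 ^ k := by
          rw [← hval]
          simp only [val2c, List.headI, ht, natVal2_cons, List.length_cons]
          push_cast
          have hlen : t₀.length + 1 = k := by omega
          rw [hlen, pow_succ]
          push_cast
          ring
        have hn2 : n ≤ -2 := by
          have hlt : natVal2 t < 2 ^ t₀.length := by
            rw [ht, he0, natVal2_cons]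
            have := natVal2_lt t₀ (fun x hx => hdig x (by simp [ht, hx]))
            omega
          have h1 : (1 : ℤ) ≤ 2 ^ t₀.length := by exact_mod_cast Nat.one_le_two_pow
          have h2k : (2 : ℤ) ^ k = 2 * 2 ^ t₀.length := by
            rw [hkt, pow_succ]; ring
          have hlt' : (natVal2 t : ℤ) < 2 ^ t₀.length := by exact_mod_cast hlt
          rw [hnval, h2k]
          linarith
        refine Or.inr (Or.inr (Or.inr ⟨hn2, k, m, a,
          ⟨one_dvd _, hk1, hadm, ?_, ?_⟩, ?_⟩))
        · intro hc
          have hlc := congrArg List.length hc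
          rw [show List.range 1 = [0] from rfl] at hlc
          simp only [List.map_cons, List.map_nil, List.flatten_cons, List.flatten_nil,
            Nat.sub_zero, Nat.sub_self, iterW, Function.iterate_zero, id_eq,
            List.append_nil, Function.iterate_one, substW, hmtop,
            List.length_append, List.length_cons, List.length_nil] at hlc
          simp [h2] at hlc
        · have hiw : (iterW ψ k [β (-1)]).length = 2 ^ k := by
            rw [iterW_length h2]; simp
          rw [hsl, hiw, hnval]
          push_cast
          ring
        · rw [hdt]
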